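/- Under the hypotheses of the numeric iteration lemma (y_{j+1} ≤ A^{ωⱼ/κⱼ}(yⱼ^{rⱼ}+yⱼ^{sⱼ})^{1/κⱼ}, ᾱ = Σωⱼ/κⱼ < ∞, Πβⱼ → β̄ > 0, Πγⱼ → γ̄ > 0), one has limsup_{j→∞} yⱼ ≤ (2A)^{G ᾱ} max{y₀^{γ̄}, y₀^{β̄}}, where G = limsup_{j→∞} Gⱼ with Gⱼ = max{1, γ_m⋯γ_n : 1 ≤ m ≤ n < j}. -/

import Mathlib

/-!
Since `ω ≥ 1`, each step of the recursion gives `y (j+1) ≤ (2A)^{α_j} max (y_j^{β_j}, y_j^{γ_j})`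
with `α_j = ω_j / κ_j`. Iterating, by induction on `J`,
`y_J ≤ (2A)^{D_J} max (y₀^{β_0⋯β_{J-1}}, y₀^{γ_0⋯γ_{J-1}})`, where
`D_J = Σ_{j<J} α_j γ_{j+1}⋯γ_{J-1}`. Every product `γ_{j+1}⋯γ_{J-1}` is at most `G_J ≤ G`,
so `D_J ≤ G ᾱ`, and the bound passes to the limit since the products converge.
-/

open Filter Finset Real Topology

lemma le_two_mul_rpow_mul_max_of_le {y y' κ r s ω A : ℝ} (hy : 0 ≤ y) (hκ : 0 < κ)
    (hω : 1 ≤ ω) (hA : 0 ≤ A) (h : y' ≤ A ^ (ω / κ) * (y ^ r + y ^ s) ^ (1 / κ)) :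
    y' ≤ (2 * A) ^ (ω / κ) * max (y ^ (r / κ)) (y ^ (s / κ)) := by
  have hp : 0 ≤ 1 / κ := by positivity
  have hsum : (y ^ r + y ^ s) ^ (1 / κ) ≤ 2 ^ (1 / κ) * max (y ^ (r / κ)) (y ^ (s / κ)) :=
    calc (y ^ r + y ^ s) ^ (1 / κ) ≤ (2 * max (y ^ r) (y ^ s)) ^ (1 / κ) := by
          gcongr
          linarith [le_max_left (y ^ r) (y ^ s), le_max_right (y ^ r) (y ^ s)]
      _ = 2 ^ (1 / κ) * max (y ^ r) (y ^ s) ^ (1 / κ) := mul_rpow zero_le_two (by positivity)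
      _ = 2 ^ (1 / κ) * max (y ^ (r / κ)) (y ^ (s / κ)) := by
          rw [rpow_max (by positivity) (by positivity) hp, ← rpow_mul hy, ← rpow_mul hy,
            mul_one_div, mul_one_div]
  have htwo : (2 : ℝ) ^ (1 / κ) ≤ 2 ^ (ω / κ) :=
    rpow_le_rpow_of_exponent_le one_le_two (by gcongr)
  calc y' ≤ A ^ (ω / κ) * (2 ^ (1 / κ) * max (y ^ (r / κ)) (y ^ (s / κ))) :=
        h.trans (by gcongr)
    _ ≤ A ^ (ω / κ) * (2 ^ (ω / κ) * max (y ^ (r / κ)) (y ^ (s / κ))) := by gcongr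
    _ = (2 * A) ^ (ω / κ) * max (y ^ (r / κ)) (y ^ (s / κ)) := by
        rw [mul_rpow zero_le_two hA]; ring

lemma max_rpow_rpow_rpow_le {t b c β e γ : ℝ} (ht : 0 ≤ t) (hb : 0 ≤ b) (hbc : b ≤ c)
    (hβ : 0 ≤ β) (hβe : β ≤ e) (heγ : e ≤ γ) :
    max (t ^ b) (t ^ c) ^ e ≤ max (t ^ (b * β)) (t ^ (c * γ)) := by
  rcases le_total 1 t with h1 | h1
  · rw [max_eq_right (rpow_le_rpow_of_exponent_le h1 hbc), ← rpow_mul ht]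
    exact (rpow_le_rpow_of_exponent_le h1 (by gcongr; linarith)).trans (le_max_right _ _)
  · rw [max_eq_left (rpow_le_rpow_of_exponent_ge' ht h1 hb hbc), ← rpow_mul ht]
    exact (rpow_le_rpow_of_exponent_ge' ht h1 (by positivity) (by gcongr)).trans
      (le_max_left _ _)

def weightedTailSum (α γ : ℕ → ℝ) (J : ℕ) : ℝ :=
  ∑ j ∈ range J, α j * ∏ i ∈ Ico (j + 1) J, γ i

section weightedTailSum

variable {α γ : ℕ → ℝ}

lemma weightedTailSum_succ (J : ℕ) :
    weightedTailSum α γ (J + 1) = α J + γ J * weightedTailSum α γ J := by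
  rw [weightedTailSum, weightedTailSum, sum_range_succ, Ico_self, prod_empty, mul_one, mul_sum,
    add_comm]
  congr 1
  refine sum_congr rfl fun j hj => ?_
  rw [prod_Ico_succ_top (mem_range.1 hj)]
  ring

lemma weightedTailSum_nonneg (hα : ∀ j, 0 ≤ α j) (hγ : ∀ j, 0 ≤ γ j) (J : ℕ) :
    0 ≤ weightedTailSum α γ J :=
  sum_nonneg fun j _ => mul_nonneg (hα j) (prod_nonneg fun i _ => hγ i)

lemma weightedTailSum_le_mul_sum {K : ℝ} {J : ℕ} (hα : ∀ j, 0 ≤ α j)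
    (hK : ∀ j < J, ∏ i ∈ Ico (j + 1) J, γ i ≤ K) :
    weightedTailSum α γ J ≤ K * ∑ j ∈ range J, α j := by
  rw [weightedTailSum, mul_sum]
  refine sum_le_sum fun j hj => ?_
  rw [mul_comm K]
  exact mul_le_mul_of_nonneg_left (hK j (mem_range.1 hj)) (hα j)

end weightedTailSum

theorem le_rpow_weightedTailSum_mul_max {y α β γ : ℕ → ℝ} {c : ℝ} (hc : 1 ≤ c)
    (hy : ∀ j, 0 ≤ y j) (hα : ∀ j, 0 ≤ α j) (hβ : ∀ j, 0 ≤ β j) (hβγ : ∀ j, β j ≤ γ j)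
    (hstep : ∀ j, y (j + 1) ≤ c ^ α j * max (y j ^ β j) (y j ^ γ j)) (J : ℕ) :
    y J ≤ c ^ weightedTailSum α γ J *
      max (y 0 ^ ∏ j ∈ range J, β j) (y 0 ^ ∏ j ∈ range J, γ j) := by
  induction J with
  | zero => simp [weightedTailSum]
  | succ J ih =>
    set D := weightedTailSum α γ J
    set Φ := max (y 0 ^ ∏ j ∈ range J, β j) (y 0 ^ ∏ j ∈ range J, γ j)
    have hγ : ∀ j, 0 ≤ γ j := fun j => (hβ j).trans (hβγ j)
    have hΦ : 0 ≤ Φ := (rpow_nonneg (hy 0) _).trans (le_max_left _ _)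
    have hpow : ∀ e, β J ≤ e → e ≤ γ J → y J ^ e ≤ c ^ (γ J * D) *
        max (y 0 ^ ∏ j ∈ range (J + 1), β j) (y 0 ^ ∏ j ∈ range (J + 1), γ j) := by
      intro e hβe heγ
      have he : 0 ≤ e := (hβ J).trans hβe
      calc y J ^ e ≤ (c ^ D * Φ) ^ e := rpow_le_rpow (hy J) ih he
        _ = c ^ (e * D) * Φ ^ e := by
            rw [mul_rpow (by positivity) hΦ, ← rpow_mul (by positivity), mul_comm D]
        _ ≤ c ^ (γ J * D) *
            max (y 0 ^ ∏ j ∈ range (J + 1), β j) (y 0 ^ ∏ j ∈ range (J + 1), γ j) := by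
            rw [prod_range_succ, prod_range_succ]
            gcongr
            · exact weightedTailSum_nonneg hα hγ J
            · exact max_rpow_rpow_rpow_le (hy 0) (prod_nonneg fun i _ => hβ i)
                (prod_le_prod (fun i _ => hβ i) fun i _ => hβγ i) (hβ J) hβe heγ
    calc y (J + 1) ≤ c ^ α J * max (y J ^ β J) (y J ^ γ J) := hstep J
      _ ≤ c ^ α J * (c ^ (γ J * D) *
          max (y 0 ^ ∏ j ∈ range (J + 1), β j) (y 0 ^ ∏ j ∈ range (J + 1), γ j)) := by
          gcongr
          exact max_le (hpow _ le_rfl (hβγ J)) (hpow _ (hβγ J) le_rfl)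
      _ = _ := by
          rw [weightedTailSum_succ, rpow_add (by linarith), mul_assoc]

lemma exists_prod_Icc_le_of_tendsto_prod {γ : ℕ → ℝ} {L : ℝ} (hγ : ∀ j, 0 < γ j) (hL : L ≠ 0)
    (hprod : Tendsto (fun J => ∏ j ∈ range J, γ j) atTop (𝓝 L)) :
    ∃ M, ∀ m n, m ≤ n → ∏ i ∈ Icc m n, γ i ≤ M := by
  obtain ⟨M₁, hM₁⟩ := hprod.bddAbove_range
  obtain ⟨M₂, hM₂⟩ := (hprod.inv₀ hL).bddAbove_range
  refine ⟨M₁ * M₂, fun m n hmn => ?_⟩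
  have hpos : ∀ J, 0 < ∏ j ∈ range J, γ j := fun J => prod_pos fun j _ => hγ j
  have hsplit : ∏ i ∈ Icc m n, γ i = (∏ j ∈ range (n + 1), γ j) * (∏ j ∈ range m, γ j)⁻¹ := by
    rw [← Ico_add_one_right_eq_Icc, ← prod_range_mul_prod_Ico γ (by omega : m ≤ n + 1),
      mul_comm, inv_mul_cancel_left₀ (hpos m).ne']
  rw [hsplit]
  exact mul_le_mul (hM₁ ⟨n + 1, rfl⟩) (hM₂ ⟨m, rfl⟩) (inv_pos.2 (hpos m)).le
    ((hpos (n + 1)).le.trans (hM₁ ⟨n + 1, rfl⟩))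

def intervalProds (γ : ℕ → ℝ) (j : ℕ) : Set ℝ :=
  {x | ∃ m n : ℕ, 1 ≤ m ∧ m ≤ n ∧ n < j ∧ x = ∏ i ∈ Icc m n, γ i}

noncomputable def maxIntervalProd (γ : ℕ → ℝ) (j : ℕ) : ℝ :=
  sSup ({1} ∪ intervalProds γ j)

section maxIntervalProd

variable {γ : ℕ → ℝ} {M : ℝ} (hM : ∀ m n, m ≤ n → ∏ i ∈ Icc m n, γ i ≤ M)
include hM

lemma max_one_mem_upperBounds_intervalProds (j : ℕ) :
    max 1 M ∈ upperBounds ({1} ∪ intervalProds γ j) := by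
  rintro x (rfl | ⟨m, n, -, hmn, -, rfl⟩)
  · exact le_max_left _ _
  · exact (hM m n hmn).trans (le_max_right _ _)

lemma one_le_maxIntervalProd (j : ℕ) : 1 ≤ maxIntervalProd γ j :=
  le_csSup ⟨_, max_one_mem_upperBounds_intervalProds hM j⟩ (Set.mem_union_left _ rfl)

lemma monotone_maxIntervalProd : Monotone (maxIntervalProd γ) := by
  intro a b hab
  refine csSup_le ⟨1, Set.mem_union_left _ rfl⟩ ?_
  rintro x (rfl | ⟨m, n, h1, hmn, hn, rfl⟩)
  · exact one_le_maxIntervalProd hM b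
  · exact le_csSup ⟨_, max_one_mem_upperBounds_intervalProds hM b⟩
      (Set.mem_union_right _ ⟨m, n, h1, hmn, hn.trans_le hab, rfl⟩)

lemma bddAbove_range_maxIntervalProd : BddAbove (Set.range (maxIntervalProd γ)) :=
  ⟨max 1 M, by
    rintro _ ⟨j, rfl⟩
    exact csSup_le ⟨1, Set.mem_union_left _ rfl⟩ (max_one_mem_upperBounds_intervalProds hM j)⟩

lemma prod_Ico_le_maxIntervalProd {m n : ℕ} (hm : 1 ≤ m) :
    ∏ i ∈ Ico m n, γ i ≤ maxIntervalProd γ n := by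
  rcases lt_or_ge m n with hmn | hnm
  · obtain ⟨k, rfl⟩ := Nat.exists_eq_add_of_lt hmn
    rw [Ico_add_one_right_eq_Icc]
    exact le_csSup ⟨_, max_one_mem_upperBounds_intervalProds hM _⟩
      (Set.mem_union_right _ ⟨m, m + k, hm, by omega, by omega, rfl⟩)
  · rw [Ico_eq_empty_of_le hnm, prod_empty]
    exact one_le_maxIntervalProd hM n

end maxIntervalProd

lemma Monotone.le_limsup_atTop {f : ℕ → ℝ} (hf : Monotone f) (hb : BddAbove (Set.range f))
    (n : ℕ) : f n ≤ limsup f atTop := by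
  rw [(tendsto_atTop_ciSup hf hb).limsup_eq]
  exact le_ciSup hb n

lemma limsup_le_of_le_of_tendsto {y u : ℕ → ℝ} {L : ℝ} (hy : ∀ j, 0 ≤ y j) (hyu : ∀ j, y j ≤ u j)
    (hu : Tendsto u atTop (𝓝 L)) : limsup y atTop ≤ L :=
  (limsup_le_limsup (Eventually.of_forall hyu) (isCoboundedUnder_le_of_le atTop hy)
    hu.isBoundedUnder_le).trans_eq hu.limsup_eq

theorem stmt_12 (y κ r s ω : ℕ → ℝ) (A : ℝ)
    (hy : ∀ j, 0 ≤ y j) (hκ : ∀ j, 0 < κ j) (hr : ∀ j, 0 < r j) (hrs : ∀ j, r j ≤ s j)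
    (hω : ∀ j, 1 ≤ ω j) (hA : 1 ≤ A)
    (hiter : ∀ j, y (j + 1) ≤ A ^ (ω j / κ j) * (y j ^ r j + y j ^ s j) ^ (1 / κ j))
    (β γ : ℕ → ℝ) (hβ : ∀ j, β j = r j / κ j) (hγ : ∀ j, γ j = s j / κ j)
    (αbar : ℝ) (hαbar : HasSum (fun j => ω j / κ j) αbar)
    (βbar γbar : ℝ) (hβbar : 0 < βbar) (hγbar : 0 < γbar)
    (hβprod : Filter.Tendsto (fun J => ∏ j ∈ Finset.range J, β j) Filter.atTop (nhds βbar))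
    (hγprod : Filter.Tendsto (fun J => ∏ j ∈ Finset.range J, γ j) Filter.atTop (nhds γbar))
    (G : ℕ → ℝ)
    (hG : ∀ j, G j = sSup ({1} ∪ {x : ℝ | ∃ m n : ℕ, 1 ≤ m ∧ m ≤ n ∧ n < j ∧
      x = ∏ i ∈ Finset.Icc m n, γ i})) :
    Filter.limsup y Filter.atTop ≤
      (2 * A) ^ (Filter.limsup G Filter.atTop * αbar) * max (y 0 ^ γbar) (y 0 ^ βbar) := by
  have h2A : 1 ≤ 2 * A := by linarith
  have hα : ∀ j, 0 ≤ ω j / κ j := fun j => div_nonneg (zero_le_one.trans (hω j)) (hκ j).le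
  have hβ0 : ∀ j, 0 ≤ β j := fun j => hβ j ▸ (div_pos (hr j) (hκ j)).le
  have hγ0 : ∀ j, 0 < γ j := fun j => hγ j ▸ div_pos ((hr j).trans_le (hrs j)) (hκ j)
  have hβγ : ∀ j, β j ≤ γ j := fun j => by
    rw [hβ, hγ]; exact div_le_div_of_nonneg_right (hrs j) (hκ j).le
  have hstep : ∀ j, y (j + 1) ≤ (2 * A) ^ (ω j / κ j) * max (y j ^ β j) (y j ^ γ j) := fun j => by
    rw [hβ, hγ]
    exact le_two_mul_rpow_mul_max_of_le (hy j) (hκ j) (hω j) (by linarith) (hiter j)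
  obtain rfl : G = maxIntervalProd γ := funext hG
  obtain ⟨M, hM⟩ := exists_prod_Icc_le_of_tendsto_prod hγ0 hγbar.ne' hγprod
  have hGK := (monotone_maxIntervalProd hM).le_limsup_atTop (bddAbove_range_maxIntervalProd hM)
  have hD : ∀ J, weightedTailSum (fun j => ω j / κ j) γ J ≤
      limsup (maxIntervalProd γ) atTop * αbar := fun J =>
    (weightedTailSum_le_mul_sum hα fun j _ => prod_Ico_le_maxIntervalProd hM j.succ_pos).trans
      (mul_le_mul (hGK J) (sum_le_hasSum _ (fun j _ => hα j) hαbar) (sum_nonneg fun j _ => hα j)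
        (zero_le_one.trans ((one_le_maxIntervalProd hM 0).trans (hGK 0))))
  have hbound : ∀ J, y J ≤ (2 * A) ^ (limsup (maxIntervalProd γ) atTop * αbar) *
      max (y 0 ^ ∏ j ∈ range J, β j) (y 0 ^ ∏ j ∈ range J, γ j) := fun J =>
    (le_rpow_weightedTailSum_mul_max h2A hy hα hβ0 hβγ hstep J).trans <|
      mul_le_mul_of_nonneg_right (rpow_le_rpow_of_exponent_le h2A (hD J))
        ((rpow_nonneg (hy 0) _).trans (le_max_left _ _))
  refine limsup_le_of_le_of_tendsto hy hbound ?_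
  rw [max_comm]
  exact ((tendsto_const_nhds.rpow hβprod (Or.inr hβbar)).max
    (tendsto_const_nhds.rpow hγprod (Or.inr hγbar))).const_mul _
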